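/- Fix σ > 0, B > 0, R > 0. Let μ be a probability measure on ℝ^p with μ{x : ‖x‖ ≤ B} = 1, and let G* be a probability measure with G*{β : ‖β‖ ≤ R} = 1. Define T_{G*} = ∫ ( ∫ √(f_x^{G*}(y)) dy )² dμ(x). Then there exists a universal constant C > 0 (not depending on p, σ, B, R, μ, G*) such that T_{G*} ≤ C (RB + σ)² / σ. -/

import Mathlib

open MeasureTheory Real
open scoped RealInnerProductSpace ENNReal

/-- The standard normal density. -/
noncomputable def stdNormalPdf (z : ℝ) : ℝ := (Real.sqrt (2 * Real.pi))⁻¹ * Real.exp (-z ^ 2 / 2)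

/-- The mixture-of-linear-regressions conditional density
`f_x^G(y) = (1/σ) ∫ φ((y − xᵀβ)/σ) dG(β)`. -/
noncomputable def mixDensity {p : ℕ} (σ : ℝ) (G : Measure (EuclideanSpace ℝ (Fin p)))
    (x : EuclideanSpace ℝ (Fin p)) (y : ℝ) : ℝ :=
  σ⁻¹ * ∫ β, stdNormalPdf ((y - ⟪x, β⟫) / σ) ∂G

/-- `T_{G*} = ∫ (∫ √(f_x^{G*}(y)) dy)² dμ(x)`. -/
noncomputable def TGstar (p : ℕ) (σ : ℝ)
    (Gstar μ : Measure (EuclideanSpace ℝ (Fin p))) : ℝ :=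
  ∫ x, (∫ y : ℝ, Real.sqrt (mixDensity σ Gstar x y)) ^ 2 ∂μ

/-! If `|⟪x, β⟫| ≤ a` for `G`-almost every `β`, every component of the mixture `f_x^G` is a
Gaussian centred in `[-a, a]`. Since `φ(z) ≤ exp (-z²/4)²`, this gives `√(f_x^G) ≤ σ^{-1/2} E`
for the envelope `E = 1_{[-a, a]} + exp (-(y - a)² / 4σ²) + exp (-(y + a)² / 4σ²)`, whose integral
is `2a + 4√π σ ≤ 4√π (a + σ)`. Cauchy–Schwarz gives `a = RB`, hence the bound with `C = 16π`. -/

lemma stdNormalPdf_le_exp (z : ℝ) : stdNormalPdf z ≤ exp (-z ^ 2 / 2) := by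
  have h : (√(2 * π))⁻¹ ≤ 1 :=
    inv_le_one_of_one_le₀ (one_le_sqrt.2 (by nlinarith [pi_gt_three]))
  exact mul_le_of_le_one_left (exp_nonneg _) h

lemma integrable_exp_neg_sq_sub_div (c : ℝ) {s : ℝ} (hs : 0 < s) :
    Integrable fun y : ℝ => exp (-((y - c) / s) ^ 2 / 4) := by
  have hb : 0 < 1 / (4 * s ^ 2) := by positivity
  convert (integrable_exp_neg_mul_sq hb).comp_sub_right c using 2 with y
  field_simp

lemma integral_exp_neg_sq_sub_div (c : ℝ) {s : ℝ} (hs : 0 < s) :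
    ∫ y : ℝ, exp (-((y - c) / s) ^ 2 / 4) = 2 * √π * s := by
  have hshift : (fun y : ℝ => exp (-((y - c) / s) ^ 2 / 4))
      = fun y => exp (-(1 / (4 * s ^ 2)) * (y - c) ^ 2) := by
    funext y; field_simp
  rw [hshift, integral_sub_right_eq_self (fun y => exp (-(1 / (4 * s ^ 2)) * y ^ 2)) c,
    integral_gaussian, show π / (1 / (4 * s ^ 2)) = (2 * s) ^ 2 * π by field_simp; ring,
    sqrt_mul (sq_nonneg _), sqrt_sq (by positivity)]
  ring

lemma exp_neg_sq_div_le_of_sq_le {u v : ℝ} (s : ℝ) (h : u ^ 2 ≤ v ^ 2) :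
    exp (-(v / s) ^ 2 / 4) ≤ exp (-(u / s) ^ 2 / 4) := by
  have := div_le_div_of_nonneg_right h (sq_nonneg s)
  exact exp_le_exp.2 (by rw [div_pow, div_pow]; linarith)

noncomputable def gaussianEnvelope (a s y : ℝ) : ℝ :=
  (Set.Icc (-a) a).indicator 1 y + exp (-((y - a) / s) ^ 2 / 4) + exp (-((y + a) / s) ^ 2 / 4)

lemma gaussianEnvelope_nonneg (a s y : ℝ) : 0 ≤ gaussianEnvelope a s y := by
  unfold gaussianEnvelope
  have := Set.indicator_nonneg (fun _ _ => zero_le_one' ℝ) y (s := Set.Icc (-a) a) (f := 1)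
  positivity

lemma exp_neg_sq_le_gaussianEnvelope {a c : ℝ} (hc : |c| ≤ a) (s y : ℝ) :
    exp (-((y - c) / s) ^ 2 / 4) ≤ gaussianEnvelope a s y := by
  obtain ⟨hac, hca⟩ := abs_le.1 hc
  have hind := Set.indicator_nonneg (fun _ _ => zero_le_one' ℝ) y (s := Set.Icc (-a) a) (f := 1)
  have hexp_a := exp_nonneg (-((y - a) / s) ^ 2 / 4)
  have hexp_na := exp_nonneg (-((y + a) / s) ^ 2 / 4)
  unfold gaussianEnvelope
  rcases lt_or_ge a y with hy | hy
  · have := exp_neg_sq_div_le_of_sq_le s (by nlinarith : (y - a) ^ 2 ≤ (y - c) ^ 2)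
    linarith
  rcases lt_or_ge y (-a) with hy' | hy'
  · have := exp_neg_sq_div_le_of_sq_le s (by nlinarith : (y + a) ^ 2 ≤ (y - c) ^ 2)
    linarith
  · have h1 : (Set.Icc (-a) a).indicator 1 y = (1 : ℝ) :=
      Set.indicator_of_mem (Set.mem_Icc.2 ⟨hy', hy⟩) _
    have : exp (-((y - c) / s) ^ 2 / 4) ≤ 1 :=
      exp_le_one_iff.2 (by nlinarith [sq_nonneg ((y - c) / s)])
    linarith

lemma integrable_indicator_Icc_one (a b : ℝ) :
    Integrable ((Set.Icc a b).indicator (1 : ℝ → ℝ)) :=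
  (integrableOn_const measure_Icc_lt_top.ne).integrable_indicator measurableSet_Icc

lemma integrable_gaussianEnvelope (a : ℝ) {s : ℝ} (hs : 0 < s) :
    Integrable (gaussianEnvelope a s) := by
  have hleft := integrable_exp_neg_sq_sub_div (-a) hs
  simp only [sub_neg_eq_add] at hleft
  exact ((integrable_indicator_Icc_one _ _).add (integrable_exp_neg_sq_sub_div a hs)).add hleft

lemma integral_gaussianEnvelope {a s : ℝ} (ha : 0 ≤ a) (hs : 0 < s) :
    ∫ y, gaussianEnvelope a s y = 2 * a + 4 * √π * s := by
  have hleft := integrable_exp_neg_sq_sub_div (-a) hs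
  have hleft_eq := integral_exp_neg_sq_sub_div (-a) hs
  simp only [sub_neg_eq_add] at hleft hleft_eq
  have hright := integrable_exp_neg_sq_sub_div a hs
  have hind := integrable_indicator_Icc_one (-a) a
  unfold gaussianEnvelope
  rw [integral_add (f := fun y => _ + _) (hind.add hright) hleft, integral_add hind hright,
    integral_indicator_one measurableSet_Icc, Real.volume_real_Icc_of_le (by linarith),
    integral_exp_neg_sq_sub_div a hs, hleft_eq]
  ring

section MixDensity

variable {p : ℕ} {σ a : ℝ} {G : Measure (EuclideanSpace ℝ (Fin p))} [IsProbabilityMeasure G]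
  {x : EuclideanSpace ℝ (Fin p)}

lemma mixDensity_le_sq_gaussianEnvelope (hσ : 0 ≤ σ) (hx : ∀ᵐ β ∂G, |⟪x, β⟫| ≤ a) (y : ℝ) :
    mixDensity σ G x y ≤ σ⁻¹ * gaussianEnvelope a σ y ^ 2 := by
  unfold mixDensity
  gcongr
  refine (integral_mono_of_nonneg (ae_of_all _ fun β => ?_)
    (integrable_const (gaussianEnvelope a σ y ^ 2)) (hx.mono fun β hβ => ?_)).trans_eq (by simp)
  · unfold stdNormalPdf; positivity
  · set z := (y - ⟪x, β⟫) / σ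
    calc stdNormalPdf z ≤ exp (-z ^ 2 / 2) := stdNormalPdf_le_exp z
      _ = exp (-z ^ 2 / 4) ^ 2 := by rw [← exp_nat_mul]; ring_nf
      _ ≤ gaussianEnvelope a σ y ^ 2 := by
        gcongr; exact exp_neg_sq_le_gaussianEnvelope hβ σ y

lemma integral_sqrt_mixDensity_le (hσ : 0 < σ) (ha : 0 ≤ a) (hx : ∀ᵐ β ∂G, |⟪x, β⟫| ≤ a) :
    ∫ y, √(mixDensity σ G x y) ≤ (2 * a + 4 * √π * σ) / √σ := by
  have hpt (y : ℝ) : √(mixDensity σ G x y) ≤ gaussianEnvelope a σ y / √σ := by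
    calc √(mixDensity σ G x y) ≤ √(σ⁻¹ * gaussianEnvelope a σ y ^ 2) :=
          sqrt_le_sqrt (mixDensity_le_sq_gaussianEnvelope hσ.le hx y)
      _ = gaussianEnvelope a σ y / √σ := by
        rw [sqrt_mul (by positivity), sqrt_inv, sqrt_sq (gaussianEnvelope_nonneg a σ y)]
        ring
  calc ∫ y, √(mixDensity σ G x y) ≤ ∫ y, gaussianEnvelope a σ y / √σ :=
        integral_mono_of_nonneg (ae_of_all _ fun _ => sqrt_nonneg _)
          ((integrable_gaussianEnvelope a hσ).div_const _) (ae_of_all _ hpt)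
    _ = (2 * a + 4 * √π * σ) / √σ := by rw [integral_div, integral_gaussianEnvelope ha hσ]

lemma sq_integral_sqrt_mixDensity_le (hσ : 0 < σ) (ha : 0 ≤ a) (hx : ∀ᵐ β ∂G, |⟪x, β⟫| ≤ a) :
    (∫ y, √(mixDensity σ G x y)) ^ 2 ≤ 16 * π * (a + σ) ^ 2 / σ := by
  have hπ : 1 ≤ √π := one_le_sqrt.2 (by linarith [pi_gt_three])
  calc (∫ y, √(mixDensity σ G x y)) ^ 2 ≤ ((2 * a + 4 * √π * σ) / √σ) ^ 2 :=
        pow_le_pow_left₀ (integral_nonneg fun _ => sqrt_nonneg _)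
          (integral_sqrt_mixDensity_le hσ ha hx) 2
    _ = (2 * a + 4 * √π * σ) ^ 2 / σ := by rw [div_pow, sq_sqrt hσ.le]
    _ ≤ (4 * √π * (a + σ)) ^ 2 / σ := by gcongr; nlinarith
    _ = 16 * π * (a + σ) ^ 2 / σ := by rw [mul_pow, mul_pow, sq_sqrt pi_pos.le]; ring

lemma TGstar_le {μ : Measure (EuclideanSpace ℝ (Fin p))} [IsProbabilityMeasure μ] (hσ : 0 < σ)
    (ha : 0 ≤ a) (h : ∀ᵐ x ∂μ, ∀ᵐ β ∂G, |⟪x, β⟫| ≤ a) :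
    TGstar p σ G μ ≤ 16 * π * (a + σ) ^ 2 / σ :=
  (integral_mono_of_nonneg (ae_of_all _ fun _ => sq_nonneg _) (integrable_const _)
    (h.mono fun _ hx => sq_integral_sqrt_mixDensity_le hσ ha hx)).trans_eq (by simp)

end MixDensity

/-- there is a universal constant `C` (independent of the dimension `p`,
`σ`, `B`, `R`, `μ` and `G*`) such that `T_{G*} ≤ C (RB + σ)² / σ`. -/
theorem TGstar_bound :
    ∃ C : ℝ, 0 < C ∧
      ∀ (p : ℕ) (σ B R : ℝ), 0 < σ → 0 < B → 0 < R →
      ∀ (μ : Measure (EuclideanSpace ℝ (Fin p))), IsProbabilityMeasure μ →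
        μ ({x : EuclideanSpace ℝ (Fin p) | ‖x‖ ≤ B}ᶜ) = 0 →
      ∀ (Gstar : Measure (EuclideanSpace ℝ (Fin p))), IsProbabilityMeasure Gstar →
        Gstar ({β : EuclideanSpace ℝ (Fin p) | ‖β‖ ≤ R}ᶜ) = 0 →
      TGstar p σ Gstar μ ≤ C * (R * B + σ) ^ 2 / σ := by
  refine ⟨16 * π, by positivity, fun p σ B R hσ hB _ μ _ hμB Gstar _ hGR => ?_⟩
  have hμ : ∀ᵐ x ∂μ, ‖x‖ ≤ B := hμB
  have hG : ∀ᵐ β ∂Gstar, ‖β‖ ≤ R := hGR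
  refine TGstar_le hσ (by positivity) (hμ.mono fun x hx => hG.mono fun β hβ => ?_)
  calc |⟪x, β⟫| ≤ ‖x‖ * ‖β‖ := abs_real_inner_le_norm x β
    _ ≤ R * B := by rw [mul_comm R]; exact mul_le_mul hx hβ (norm_nonneg β) hB.le
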